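/- Cancellation between convection of Q and the symmetric stress: let u : ℝ² → ℝ² be a smooth, compactly supported, divergence-free vector field (∂₁u₁ + ∂₂u₂ = 0), and let Q : ℝ² → M₃(ℝ) be a smooth compactly supported field of 3×3 real symmetric matrices. Then ∫_{ℝ²} Σ_{i=1}^{2} u_i · tr(∂_iQ · ΔQ) dx = ∫_{ℝ²} Σ_{i=1}^{2} Σ_{k=1}^{2} u_i · ∂_k( tr(∂_iQ · ∂_kQ) ) dx; in other words ⟨u·∇Q, ΔQ⟩_{L²} = ⟨u, div(∇Q⊙∇Q)⟩_{L²}, where (∇Q⊙∇Q)_{ik} := tr(∂_iQ ∂_kQ). -/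

import Mathlib

/-! Pointwise, the product rule, the symmetry of second derivatives and `tr (A B) = tr (B A)`
give `∑ₖ ∂ₖ tr(∂ᵢQ ∂ₖQ) = tr(∂ᵢQ ΔQ) + ½ ∂ᵢ E` with `E = ∑ₖ tr(∂ₖQ ∂ₖQ)`. Integrated against
`u`, the gradient term vanishes: integration by parts moves `∂ᵢ` onto `uᵢ`, leaving
`-∫ (div u) E = 0`. -/

open MeasureTheory Matrix

noncomputable section

/-- Two-dimensional space `ℝ²`. -/
abbrev Spc : Type := EuclideanSpace ℝ (Fin 2)

/-- `3×3` real matrices. -/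
abbrev Mat : Type := Matrix (Fin 3) (Fin 3) ℝ

/-- Canonical basis vectors of `ℝ²`. -/
def e2 (i : Fin 2) : Spc := EuclideanSpace.single i 1

/-- Partial derivative in the `i`-th spatial direction. -/
def pd (i : Fin 2) (φ : Spc → ℝ) (x : Spc) : ℝ := fderiv ℝ φ x (e2 i)

/-- Two-dimensional Laplacian `Δ = ∂₁² + ∂₂²`. -/
def lap2 (φ : Spc → ℝ) (x : Spc) : ℝ := ∑ k : Fin 2, pd k (pd k φ) x

/-- Componentwise partial derivative of a matrix field. -/
def pdM (i : Fin 2) (Q : Spc → Mat) (x : Spc) : Mat :=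
  Matrix.of fun a b => pd i (fun y => Q y a b) x

/-- Componentwise Laplacian of a matrix field. -/
def lapM (Q : Spc → Mat) (x : Spc) : Mat :=
  Matrix.of fun a b => lap2 (fun y => Q y a b) x

theorem pd_mul {φ ψ : Spc → ℝ} {x : Spc} (hφ : DifferentiableAt ℝ φ x)
    (hψ : DifferentiableAt ℝ ψ x) (i : Fin 2) :
    pd i (fun y => φ y * ψ y) x = pd i φ x * ψ x + φ x * pd i ψ x := by
  simp only [pd, fderiv_fun_mul hφ hψ, _root_.add_apply, _root_.smul_apply, smul_eq_mul]
  ring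

theorem pd_sum {ι : Type*} (s : Finset ι) {f : ι → Spc → ℝ} {x : Spc}
    (hf : ∀ j ∈ s, DifferentiableAt ℝ (f j) x) (i : Fin 2) :
    pd i (fun y => ∑ j ∈ s, f j y) x = ∑ j ∈ s, pd i (f j) x := by
  simp [pd, fderiv_fun_sum hf]

theorem contDiff_pd {φ : Spc → ℝ} {m n : WithTop ℕ∞} (h : ContDiff ℝ n φ) (hmn : m + 1 ≤ n)
    (i : Fin 2) : ContDiff ℝ m (pd i φ) :=
  (h.fderiv_right hmn).clm_apply contDiff_const

theorem continuous_pd {φ : Spc → ℝ} (h : ContDiff ℝ 1 φ) (i : Fin 2) :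
    Continuous (pd i φ) :=
  (contDiff_pd (m := 0) h (by norm_num) i).continuous

theorem hasCompactSupport_pd {φ : Spc → ℝ} (h : HasCompactSupport φ) (i : Fin 2) :
    HasCompactSupport (pd i φ) :=
  h.fderiv_apply ℝ (e2 i)

theorem pd_pd_comm {φ : Spc → ℝ} (h : ContDiff ℝ 2 φ) (i k : Fin 2) (x : Spc) :
    pd k (pd i φ) x = pd i (pd k φ) x := by
  have hsymm : IsSymmSndFDerivAt ℝ φ x :=
    h.contDiffAt.isSymmSndFDerivAt (by simp [minSmoothness_of_isRCLikeNormedField])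
  have hd : DifferentiableAt ℝ (fderiv ℝ φ) x :=
    (h.fderiv_right (m := 1) le_rfl).differentiable one_ne_zero x
  have hpd_pd : ∀ v w : Spc,
      fderiv ℝ (fun y => fderiv ℝ φ y v) x w = fderiv ℝ (fderiv ℝ φ) x w v :=
    fun v w => by simp [fderiv_clm_apply hd (differentiableAt_const v)]
  unfold pd
  rw [hpd_pd, hpd_pd, hsymm.eq]

theorem integral_mul_pd_eq_neg {φ ψ : Spc → ℝ} (hφ : ContDiff ℝ 1 φ) (hφs : HasCompactSupport φ)
    (hψ : ContDiff ℝ 1 ψ) (i : Fin 2) :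
    ∫ x, φ x * pd i ψ x = -∫ x, pd i φ x * ψ x := by
  have hφ' := continuous_pd hφ i
  have hψ' := continuous_pd hψ i
  exact integral_mul_fderiv_eq_neg_fderiv_mul_of_integrable
    ((hφ'.mul hψ.continuous).integrable_of_hasCompactSupport
      (hasCompactSupport_pd hφs i).mul_right)
    ((hφ.continuous.mul hψ').integrable_of_hasCompactSupport hφs.mul_right)
    ((hφ.continuous.mul hψ.continuous).integrable_of_hasCompactSupport hφs.mul_right)
    (fun x _ => hφ.differentiable one_ne_zero x) (fun x _ => hψ.differentiable one_ne_zero x)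

theorem integrable_sum_mul_of_hasCompactSupport {ι : Type*} [Fintype ι] {u : Spc → ι → ℝ}
    {g : ι → Spc → ℝ} (hu : ∀ i, Continuous fun x => u x i)
    (hu_supp : ∀ i, HasCompactSupport fun x => u x i) (hg : ∀ i, Continuous (g i)) :
    Integrable fun x => ∑ i, u x i * g i x :=
  integrable_finsetSum _ fun i _ =>
    ((hu i).mul (hg i)).integrable_of_hasCompactSupport (hu_supp i).mul_right

theorem integral_sum_mul_pd_eq_zero_of_div_eq_zero {u : Spc → Fin 2 → ℝ}
    (hu : ∀ i, ContDiff ℝ 1 fun x => u x i) (hu_supp : ∀ i, HasCompactSupport fun x => u x i)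
    (hdiv : ∀ x, ∑ i : Fin 2, pd i (fun y => u y i) x = 0) {F : Spc → ℝ} (hF : ContDiff ℝ 1 F) :
    ∫ x, ∑ i, u x i * pd i F x = 0 :=
  calc ∫ x, ∑ i, u x i * pd i F x
      = ∑ i, ∫ x, u x i * pd i F x :=
        integral_finsetSum _ fun i _ => ((hu i).continuous.mul
          (continuous_pd hF i)).integrable_of_hasCompactSupport (hu_supp i).mul_right
    _ = -∑ i, ∫ x, pd i (fun y => u y i) x * F x := by
        simp only [integral_mul_pd_eq_neg (hu _) (hu_supp _) hF, Finset.sum_neg_distrib]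
    _ = -∫ x, (∑ i, pd i (fun y => u y i) x) * F x := by
        simp only [Finset.sum_mul]
        rw [integral_finsetSum _ fun i _ =>
          (((continuous_pd (hu i) i).mul hF.continuous).integrable_of_hasCompactSupport
            (hasCompactSupport_pd (hu_supp i) i).mul_right :
              Integrable fun x => pd i (fun y => u y i) x * F x)]
    _ = 0 := by simp [hdiv]

theorem pd_trace_mul {A B : Spc → Mat} {x : Spc}
    (hA : ∀ a b, DifferentiableAt ℝ (fun y => A y a b) x)
    (hB : ∀ a b, DifferentiableAt ℝ (fun y => B y a b) x) (k : Fin 2) :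
    pd k (fun y => (A y * B y).trace) x = (pdM k A x * B x).trace + (A x * pdM k B x).trace := by
  have hrow : ∀ a, pd k (fun y => ∑ b, A y a b * B y b a) x
      = ∑ b, (pd k (fun y => A y a b) x * B x b a + A x a b * pd k (fun y => B y b a) x) :=
    fun a => by
      rw [pd_sum (f := fun b y => A y a b * B y b a) _ fun b _ => (hA a b).mul (hB b a)]
      exact Finset.sum_congr rfl fun b _ => pd_mul (hA a b) (hB b a) k
  simp only [Matrix.trace, Matrix.diag, Matrix.mul_apply]
  rw [pd_sum (f := fun a y => ∑ b, A y a b * B y b a) _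
    fun a _ => DifferentiableAt.fun_sum fun b _ => (hA a b).mul (hB b a)]
  simp only [hrow, pdM, Matrix.of_apply, Finset.sum_add_distrib]

theorem pdM_pdM_comm {Q : Spc → Mat} (hQ : ∀ a b, ContDiff ℝ 2 fun x => Q x a b) (i k : Fin 2)
    (x : Spc) : pdM k (pdM i Q) x = pdM i (pdM k Q) x := by
  ext a b
  exact pd_pd_comm (hQ a b) i k x

theorem lapM_eq_sum_pdM_pdM (Q : Spc → Mat) (x : Spc) : lapM Q x = ∑ k, pdM k (pdM k Q) x := by
  ext a b
  simp [lapM, lap2, pdM, Matrix.sum_apply]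

theorem contDiff_trace_mul {A B : Spc → Mat} {n : WithTop ℕ∞}
    (hA : ∀ a b, ContDiff ℝ n fun y => A y a b) (hB : ∀ a b, ContDiff ℝ n fun y => B y a b) :
    ContDiff ℝ n fun y => (A y * B y).trace := by
  simp only [Matrix.trace, Matrix.diag, Matrix.mul_apply]
  exact ContDiff.sum fun a _ => ContDiff.sum fun b _ => (hA a b).mul (hB b a)

theorem continuous_trace_mul {A B : Spc → Mat} (hA : ∀ a b, Continuous fun y => A y a b)
    (hB : ∀ a b, Continuous fun y => B y a b) : Continuous fun y => (A y * B y).trace :=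
  ((continuous_matrix hA).matrix_mul (continuous_matrix hB)).matrix_trace

theorem contDiff_pdM_apply {Q : Spc → Mat} (hQ : ∀ a b, ContDiff ℝ 2 fun x => Q x a b)
    (k : Fin 2) (a b : Fin 3) : ContDiff ℝ 1 fun y => pdM k Q y a b :=
  contDiff_pd (hQ a b) le_rfl k

theorem differentiableAt_pdM_apply {Q : Spc → Mat} (hQ : ∀ a b, ContDiff ℝ 2 fun x => Q x a b)
    (k : Fin 2) (x : Spc) (a b : Fin 3) : DifferentiableAt ℝ (fun y => pdM k Q y a b) x :=
  (contDiff_pdM_apply hQ k a b).differentiable one_ne_zero x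

theorem pd_trace_pdM_mul_self {Q : Spc → Mat} (hQ : ∀ a b, ContDiff ℝ 2 fun x => Q x a b)
    (i k : Fin 2) (x : Spc) :
    pd i (fun y => (pdM k Q y * pdM k Q y).trace) x
      = 2 * (pdM k (pdM i Q) x * pdM k Q x).trace := by
  rw [pd_trace_mul (differentiableAt_pdM_apply hQ k x) (differentiableAt_pdM_apply hQ k x),
    Matrix.trace_mul_comm (pdM k Q x), pdM_pdM_comm hQ]
  ring

theorem sum_pd_trace_pdM_mul_pdM {Q : Spc → Mat} (hQ : ∀ a b, ContDiff ℝ 2 fun x => Q x a b)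
    (i : Fin 2) (x : Spc) :
    ∑ k, pd k (fun y => (pdM i Q y * pdM k Q y).trace) x
      = (pdM i Q x * lapM Q x).trace + pd i (fun y => ∑ k, (pdM k Q y * pdM k Q y).trace) x / 2 :=
  have hdiff := differentiableAt_pdM_apply hQ
  calc ∑ k, pd k (fun y => (pdM i Q y * pdM k Q y).trace) x
      = ∑ k, ((pdM k (pdM i Q) x * pdM k Q x).trace + (pdM i Q x * pdM k (pdM k Q) x).trace) :=
        Finset.sum_congr rfl fun k _ => pd_trace_mul (hdiff i x) (hdiff k x) k
    _ = (pdM i Q x * lapM Q x).trace + ∑ k, (pdM k (pdM i Q) x * pdM k Q x).trace := by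
        rw [Finset.sum_add_distrib, lapM_eq_sum_pdM_pdM, Matrix.mul_sum, Matrix.trace_sum,
          add_comm]
    _ = (pdM i Q x * lapM Q x).trace
          + pd i (fun y => ∑ k, (pdM k Q y * pdM k Q y).trace) x / 2 := by
        rw [pd_sum _ fun k _ => (contDiff_trace_mul (contDiff_pdM_apply hQ k)
          (contDiff_pdM_apply hQ k)).differentiable one_ne_zero x]
        simp only [pd_trace_pdM_mul_self hQ, ← Finset.mul_sum]
        ring

theorem continuous_lapM_apply {Q : Spc → Mat} (hQ : ∀ a b, ContDiff ℝ 2 fun x => Q x a b)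
    (a b : Fin 3) : Continuous fun y => lapM Q y a b := by
  simp only [lapM, lap2, Matrix.of_apply]
  exact continuous_finsetSum _ fun k _ => continuous_pd (contDiff_pdM_apply hQ k a b) k

theorem convection_symmetric_stress_cancellation_general
    (u : Spc → Fin 2 → ℝ) (Q : Spc → Mat)
    (hu_smooth : ∀ i, ContDiff ℝ (⊤ : ℕ∞) fun x => u x i)
    (hu_supp : ∀ i, HasCompactSupport fun x => u x i)
    (hdiv : ∀ x, ∑ i : Fin 2, pd i (fun y => u y i) x = 0)
    (hQ_smooth : ∀ a b, ContDiff ℝ (⊤ : ℕ∞) fun x => Q x a b) :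
    ∫ x : Spc, ∑ i : Fin 2, u x i * (pdM i Q x * lapM Q x).trace
      = ∫ x : Spc, ∑ i : Fin 2, ∑ k : Fin 2,
          u x i * pd k (fun y => (pdM i Q y * pdM k Q y).trace) x := by
  have hu : ∀ i, ContDiff ℝ 1 fun x => u x i := fun i => (hu_smooth i).of_le (by norm_cast)
  have hQ : ∀ a b, ContDiff ℝ 2 fun x => Q x a b := fun a b =>
    (hQ_smooth a b).of_le (by norm_cast)
  set E : Spc → ℝ := fun y => ∑ k, (pdM k Q y * pdM k Q y).trace
  have hE : ContDiff ℝ 1 E := ContDiff.sum fun k _ =>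
    contDiff_trace_mul (contDiff_pdM_apply hQ k) (contDiff_pdM_apply hQ k)
  have hpointwise : ∀ x, ∑ i, ∑ k, u x i * pd k (fun y => (pdM i Q y * pdM k Q y).trace) x
      = ∑ i, u x i * (pdM i Q x * lapM Q x).trace + (∑ i, u x i * pd i E x) / 2 := fun x => by
    simp only [← Finset.mul_sum, sum_pd_trace_pdM_mul_pdM hQ, Finset.sum_div,
      ← Finset.sum_add_distrib]
    exact Finset.sum_congr rfl fun i _ => by ring
  have hL := integrable_sum_mul_of_hasCompactSupport (fun i => (hu i).continuous) hu_supp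
    fun i => continuous_trace_mul (fun a b => (contDiff_pdM_apply hQ i a b).continuous)
      (continuous_lapM_apply hQ)
  have hD := integrable_sum_mul_of_hasCompactSupport (fun i => (hu i).continuous) hu_supp
    fun i => continuous_pd hE i
  rw [funext hpointwise, integral_add hL (hD.div_const 2), integral_div,
    integral_sum_mul_pd_eq_zero_of_div_eq_zero hu hu_supp hdiv hE, zero_div, add_zero]

/-- **Cancellation between convection of `Q` and the symmetric stress**: for a
smooth compactly supported divergence-free vector field `u : ℝ² → ℝ²` and a
smooth compactly supported field `Q` of `3×3` real symmetric matrices,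
`⟨u·∇Q, ΔQ⟩_{L²} = ⟨u, div(∇Q ⊙ ∇Q)⟩_{L²}`, i.e.
`∫ Σᵢ uᵢ tr(∂ᵢQ ΔQ) dx = ∫ Σᵢ Σₖ uᵢ ∂ₖ(tr(∂ᵢQ ∂ₖQ)) dx`. -/
theorem convection_symmetric_stress_cancellation
    (u : Spc → Fin 2 → ℝ) (Q : Spc → Mat)
    (hu_smooth : ∀ i, ContDiff ℝ (⊤ : ℕ∞) fun x => u x i)
    (hu_supp : ∀ i, HasCompactSupport fun x => u x i)
    (hdiv : ∀ x, ∑ i : Fin 2, pd i (fun y => u y i) x = 0)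
    (hQ_smooth : ∀ a b, ContDiff ℝ (⊤ : ℕ∞) fun x => Q x a b)
    (hQ_supp : ∀ a b, HasCompactSupport fun x => Q x a b)
    (hQ_symm : ∀ x, (Q x)ᵀ = Q x) :
    ∫ x : Spc, ∑ i : Fin 2, u x i * (pdM i Q x * lapM Q x).trace
      = ∫ x : Spc, ∑ i : Fin 2, ∑ k : Fin 2,
          u x i * pd k (fun y => (pdM i Q y * pdM k Q y).trace) x :=
  convection_symmetric_stress_cancellation_general u Q hu_smooth hu_supp hdiv hQ_smooth
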